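/- An integral domain D is unit-additive if and only if for all nonzero d, e, f ∈ D with d = 1/e + 1/f (equality in the fraction field), d is a unit of D. In particular, any E-simple domain is unit-additive. -/

import Mathlib

noncomputable def recip (D : Type*) [CommRing D] [IsDomain D] : Subring (FractionRing D) :=
  Subring.closure {x | ∃ d : D, d ≠ 0 ∧ x = (algebraMap D (FractionRing D) d)⁻¹}

/-- `D` is unit-additive: the sum of any two units is a unit or zero (zero = nilpotent
in a domain). -/
def UnitAdditive (D : Type*) [CommRing D] [IsDomain D] : Prop :=
  ∀ u v : Dˣ, (u : D) + v = 0 ∨ IsUnit ((u : D) + v)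

/-- `D` is E-simple: every nonzero Egyptian element is a unit. -/
def ESimple (D : Type*) [CommRing D] [IsDomain D] : Prop :=
  ∀ d : D, d ≠ 0 → algebraMap D (FractionRing D) d ∈ recip D → IsUnit d

/-! The proof rests on the identity `(d e - 1)(d f - 1) = d (d e f - e - f) + 1`: when
`d = 1/e + 1/f`, i.e. `d e f = e + f`, the element `d e - 1` is a unit, and unit-additivity
applied to `1 + (d e - 1) = d e` makes `d` a unit. Conversely, for units `u, v` with
`u + v ≠ 0`, the element `d = u + v` is `1/u⁻¹ + 1/v⁻¹`. -/

theorem algebraMap_eq_inv_add_inv_iff {R K : Type*} [CommRing R] [Field K] [Algebra R K]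
    [FaithfulSMul R K] {d e f : R} (he : e ≠ 0) (hf : f ≠ 0) :
    algebraMap R K d = (algebraMap R K e)⁻¹ + (algebraMap R K f)⁻¹ ↔ d * e * f = e + f := by
  have hinj := FaithfulSMul.algebraMap_injective R K
  have he' : algebraMap R K e ≠ 0 := (map_ne_zero_iff _ hinj).mpr he
  have hf' : algebraMap R K f ≠ 0 := (map_ne_zero_iff _ hinj).mpr hf
  rw [← hinj.eq_iff, map_mul, map_mul, map_add]
  field_simp
  constructor <;> intro h <;> linear_combination h

theorem isUnit_mul_sub_one_of_mul_mul_eq_add {R : Type*} [CommRing R] {d e f : R}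
    (h : d * e * f = e + f) : IsUnit (d * e - 1) :=
  .of_mul_eq_one (d * f - 1) (by linear_combination d * h)

section UnitAdditive

variable {D : Type*} [CommRing D] [IsDomain D]

theorem UnitAdditive.isUnit_of_mul_mul_eq_add (hD : UnitAdditive D) {d e f : D} (hd : d ≠ 0)
    (he : e ≠ 0) (h : d * e * f = e + f) : IsUnit d := by
  obtain ⟨u, hu⟩ := isUnit_mul_sub_one_of_mul_mul_eq_add h
  have hsum : ((1 : Dˣ) : D) + u = d * e := by rw [Units.val_one, hu]; ring
  rcases hD 1 u with h0 | hunit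
  · exact absurd (hsum ▸ h0) (mul_ne_zero hd he)
  · exact isUnit_of_mul_isUnit_left (hsum ▸ hunit)

theorem unitAdditive_of_forall_isUnit_of_mul_mul_eq_add
    (H : ∀ d e f : D, d ≠ 0 → e ≠ 0 → f ≠ 0 → d * e * f = e + f → IsUnit d) :
    UnitAdditive D := by
  intro u v
  refine or_iff_not_imp_left.mpr fun hne => H _ _ _ hne u⁻¹.ne_zero v⁻¹.ne_zero ?_
  linear_combination (↑v⁻¹ : D) * u.mul_inv + (↑u⁻¹ : D) * v.mul_inv

theorem unitAdditive_iff_forall_isUnit_of_mul_mul_eq_add :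
    UnitAdditive D ↔ ∀ d e f : D, d ≠ 0 → e ≠ 0 → f ≠ 0 → d * e * f = e + f → IsUnit d :=
  ⟨fun hD _ _ _ hd he _ h => hD.isUnit_of_mul_mul_eq_add hd he h,
    unitAdditive_of_forall_isUnit_of_mul_mul_eq_add⟩

end UnitAdditive

theorem inv_algebraMap_mem_recip {D : Type*} [CommRing D] [IsDomain D] {e : D} (he : e ≠ 0) :
    (algebraMap D (FractionRing D) e)⁻¹ ∈ recip D :=
  Subring.subset_closure ⟨e, he, rfl⟩

theorem stmt_1 (D : Type*) [CommRing D] [IsDomain D] :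
    (UnitAdditive D ↔
      ∀ d e f : D, d ≠ 0 → e ≠ 0 → f ≠ 0 →
        algebraMap D (FractionRing D) d =
          (algebraMap D (FractionRing D) e)⁻¹ + (algebraMap D (FractionRing D) f)⁻¹ →
        IsUnit d) ∧
    (ESimple D → UnitAdditive D) := by
  have hchar : UnitAdditive D ↔ ∀ d e f : D, d ≠ 0 → e ≠ 0 → f ≠ 0 →
      algebraMap D (FractionRing D) d =
        (algebraMap D (FractionRing D) e)⁻¹ + (algebraMap D (FractionRing D) f)⁻¹ →
      IsUnit d := by
    rw [unitAdditive_iff_forall_isUnit_of_mul_mul_eq_add]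
    refine forall₃_congr fun d e f => imp_congr_right fun _ =>
      forall_congr' fun he => forall_congr' fun hf => ?_
    rw [algebraMap_eq_inv_add_inv_iff he hf]
  refine ⟨hchar, fun hE => hchar.mpr fun d e f hd he hf h => hE d hd ?_⟩
  exact h ▸ add_mem (inv_algebraMap_mem_recip he) (inv_algebraMap_mem_recip hf)
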